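/- Let h : ℝⁿ \ {0} → ℂ be C^∞ and positively homogeneous of degree k, restricted to the region where |ξ| ≈ 2^{jn(1−ρ)} with 0 ≤ ρ ≤ 1 and j ≥ 1, and restricted to the cone Γ = {ξ ≠ 0 : |ξ/|ξ| − e₁| < 2·2^{−jρ/2}} about e₁ = (1,0,…,0). If |∂^α_ξ h(ξ)| ≤ c₀ 2^{j|α|ρ/2} for all multi-indices α and all such ξ, then |∂_{ξ₁}h(ξ)| ≤ C c₀ for a constant C depending only on n, k, ρ, with C independent of j and c₀. -/

import Mathlib

/-- If h : ℝⁿ \ {0} → ℂ is smooth and positively homogeneous of degree k on the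
region |ξ| ≈ 2^{jn(1−ρ)} intersected with the cone of aperture 2·2^{−jρ/2} about
e₁, and all derivatives satisfy |∂^α h(ξ)| ≤ c₀·2^{j|α|ρ/2} there, then the first
partial derivative satisfies the improved bound |∂_{ξ₁}h(ξ)| ≤ C·c₀ with C
depending only on n, k, ρ, c (independent of j and c₀). -/
theorem improved_first_partial_bound {n : ℕ} (k ρ cann : ℝ)
    (hρ0 : 0 ≤ ρ) (hρ1 : ρ ≤ 1) (hc : 1 < cann) :
    ∃ C : ℝ, 0 < C ∧
      ∀ (j : ℕ), 1 ≤ j → ∀ c₀ : ℝ, 0 ≤ c₀ →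
      ∀ h : EuclideanSpace ℝ (Fin (n + 1)) → ℂ,
      ∀ D : Set (EuclideanSpace ℝ (Fin (n + 1))),
        -- D is the region |ξ| ≈ 2^{jn(1−ρ)} intersected with the cone Γ about e₁
        D = {ξ | ξ ≠ 0 ∧
              cann⁻¹ * (2 : ℝ) ^ ((j : ℝ) * (n + 1) * (1 - ρ)) ≤ ‖ξ‖ ∧
              ‖ξ‖ ≤ cann * (2 : ℝ) ^ ((j : ℝ) * (n + 1) * (1 - ρ)) ∧
              ‖(‖ξ‖⁻¹ • ξ) - EuclideanSpace.single (0 : Fin (n + 1)) (1 : ℝ)‖ <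
                2 * (2 : ℝ) ^ (-(j : ℝ) * ρ / 2)} →
        ContDiff ℝ (⊤ : ℕ∞) h →
        (∀ l : ℝ, 0 < l → ∀ ξ : EuclideanSpace ℝ (Fin (n + 1)), ξ ≠ 0 →
          h (l • ξ) = (l ^ k : ℝ) • h ξ) →
        (∀ m : ℕ, ∀ ξ ∈ D,
          ‖iteratedFDeriv ℝ m h ξ‖ ≤ c₀ * (2 : ℝ) ^ ((j : ℝ) * (m : ℝ) * ρ / 2)) →
        ∀ ξ ∈ D,
          ‖fderiv ℝ h ξ (EuclideanSpace.single (0 : Fin (n + 1)) (1 : ℝ))‖ ≤ C * c₀ := by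
  have hc0 : (0 : ℝ) < cann := lt_trans one_pos hc
  refine ⟨|k| * cann + 2, by positivity, ?_⟩
  intro j hj c₀ hc₀ h D hD hsmooth hhom hbound ξ hξ
  subst hD
  obtain ⟨hξ0, hlow, hupp, hcone⟩ := hξ
  set e₁ : EuclideanSpace ℝ (Fin (n + 1)) :=
    EuclideanSpace.single (0 : Fin (n + 1)) (1 : ℝ) with he₁
  have hdiff : DifferentiableAt ℝ h ξ := (hsmooth.differentiable (by simp)) ξ
  -- Euler's identity: fderiv h ξ ξ = k • h ξ
  have hg : HasDerivAt (fun l : ℝ => l • ξ) ξ 1 := by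
    simpa using (hasDerivAt_id (1 : ℝ)).smul_const ξ
  have hd1 : HasDerivAt (fun l : ℝ => h (l • ξ)) (fderiv ℝ h ξ ξ) 1 := by
    have hF : HasFDerivAt h (fderiv ℝ h ξ) ((1 : ℝ) • ξ) := by
      rw [one_smul]; exact hdiff.hasFDerivAt
    have := hF.comp_hasDerivAt 1 hg
    exact this
  have hd2 : HasDerivAt (fun l : ℝ => (l ^ k : ℝ) • h ξ) (k • h ξ) 1 := by
    have := (Real.hasDerivAt_rpow_const (x := 1) (p := k) (Or.inl one_ne_zero)).smul_const (h ξ)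
    simpa using this
  have heq : (fun l : ℝ => h (l • ξ)) =ᶠ[nhds 1] fun l : ℝ => (l ^ k : ℝ) • h ξ := by
    filter_upwards [Ioi_mem_nhds (zero_lt_one)] with l hl
    exact hhom l hl ξ hξ0
  have euler : fderiv ℝ h ξ ξ = k • h ξ :=
    (hd1.congr_of_eventuallyEq heq.symm).unique hd2
  -- bounds from the hypothesis
  have h0 : ‖h ξ‖ ≤ c₀ := by
    have := hbound 0 ξ ⟨hξ0, hlow, hupp, hcone⟩
    simpa [norm_iteratedFDeriv_zero] using this
  have hf1 : ‖fderiv ℝ h ξ‖ ≤ c₀ * (2 : ℝ) ^ ((j : ℝ) * ρ / 2) := by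
    have := hbound 1 ξ ⟨hξ0, hlow, hupp, hcone⟩
    have hn : ‖fderiv ℝ h ξ‖ = ‖iteratedFDeriv ℝ 1 h ξ‖ := by
      rw [← norm_iteratedFDeriv_fderiv (n := 0), norm_iteratedFDeriv_zero]
    rw [hn]
    simpa using this
  -- |ξ|⁻¹ ≤ cann
  have hE : (1 : ℝ) ≤ (2 : ℝ) ^ ((j : ℝ) * (n + 1) * (1 - ρ)) :=
    Real.one_le_rpow one_le_two
      (by have : (0 : ℝ) ≤ 1 - ρ := by linarith
          positivity)
  have hξpos : (0 : ℝ) < ‖ξ‖ := norm_pos_iff.mpr hξ0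
  have hinv : ‖ξ‖⁻¹ ≤ cann := by
    have h1 : cann⁻¹ ≤ ‖ξ‖ := le_trans (by
      nlinarith [inv_pos.mpr hc0]) hlow
    calc ‖ξ‖⁻¹ ≤ (cann⁻¹)⁻¹ := by
          apply inv_anti₀ (inv_pos.mpr hc0) h1
      _ = cann := inv_inv cann
  -- decomposition
  have hsplit : fderiv ℝ h ξ e₁ =
      ‖ξ‖⁻¹ • (fderiv ℝ h ξ ξ) - fderiv ℝ h ξ ((‖ξ‖⁻¹ • ξ) - e₁) := by
    rw [map_sub, map_smul]; abel
  rw [hsplit]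
  have hT1 : ‖‖ξ‖⁻¹ • (fderiv ℝ h ξ ξ)‖ ≤ cann * (|k| * c₀) := by
    rw [norm_smul, euler, norm_smul]
    have : ‖(‖ξ‖⁻¹ : ℝ)‖ = ‖ξ‖⁻¹ := by
      rw [Real.norm_eq_abs, abs_of_pos (inv_pos.mpr hξpos)]
    rw [this, Real.norm_eq_abs]
    have := mul_le_mul hinv (mul_le_mul_of_nonneg_left h0 (abs_nonneg k))
      (by positivity) (le_of_lt hc0)
    exact this
  have hT2 : ‖fderiv ℝ h ξ ((‖ξ‖⁻¹ • ξ) - e₁)‖ ≤ 2 * c₀ := by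
    have hle := (fderiv ℝ h ξ).le_opNorm ((‖ξ‖⁻¹ • ξ) - e₁)
    have hmul : ‖fderiv ℝ h ξ‖ * ‖(‖ξ‖⁻¹ • ξ) - e₁‖ ≤
        (c₀ * (2 : ℝ) ^ ((j : ℝ) * ρ / 2)) * (2 * (2 : ℝ) ^ (-(j : ℝ) * ρ / 2)) :=
      mul_le_mul hf1 (le_of_lt hcone) (norm_nonneg _) (by positivity)
    have hpow : (c₀ * (2 : ℝ) ^ ((j : ℝ) * ρ / 2)) * (2 * (2 : ℝ) ^ (-(j : ℝ) * ρ / 2))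
        = 2 * c₀ := by
      rw [show (c₀ * (2 : ℝ) ^ ((j : ℝ) * ρ / 2)) * (2 * (2 : ℝ) ^ (-(j : ℝ) * ρ / 2))
          = 2 * c₀ * ((2 : ℝ) ^ ((j : ℝ) * ρ / 2) * (2 : ℝ) ^ (-(j : ℝ) * ρ / 2)) by ring,
        ← Real.rpow_add two_pos, show (j : ℝ) * ρ / 2 + -(j : ℝ) * ρ / 2 = 0 by ring,
        Real.rpow_zero, mul_one]
    linarith [le_trans hle hmul, hpow.le, hpow.ge]
  calc ‖‖ξ‖⁻¹ • (fderiv ℝ h ξ ξ) - fderiv ℝ h ξ ((‖ξ‖⁻¹ • ξ) - e₁)‖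
      ≤ ‖‖ξ‖⁻¹ • (fderiv ℝ h ξ ξ)‖ + ‖fderiv ℝ h ξ ((‖ξ‖⁻¹ • ξ) - e₁)‖ := norm_sub_le _ _
    _ ≤ cann * (|k| * c₀) + 2 * c₀ := add_le_add hT1 hT2
    _ = (|k| * cann + 2) * c₀ := by ring
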